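/- arXiv:1311.7479 — 2 statements merged into one kernel-verified Lean document; each statement's English description precedes it below -/
import Mathlib

section
/- Fix N ≥ 2, 1 < p < 1 + 4/(N−1), a > 1, and set α = 2/(p−1) − (N−1)/2 > 0 and ρ(y) = (1−|y|²)^α on the open unit ball B ⊂ ℝ^N. There exists a constant C = C(N,p,a) > 0 such that for every s ≥ 1 and every measurable function w : B → ℝ with ∫_B |w|^{p+1} ρ dy < ∞, one has ∫_B |w|^{p+1}/(log(2 + e^{4s/(p−1)} w²))^a ρ dy ≤ C e^{−(p+1)s/(p−1)} + (C/s^a) ∫_B |w|^{p+1} ρ dy. -/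
open MeasureTheory Real Filter Set
open scoped RealInnerProductSpace

noncomputable section

/-- The open unit ball of `ℝ^N`. -/
def UnitBall (N : ℕ) : Set (EuclideanSpace ℝ (Fin N)) := Metric.ball 0 1

/-- The weight `ρ(y) = (1 - |y|²)^α`. -/
def rho (N : ℕ) (α : ℝ) (y : EuclideanSpace ℝ (Fin N)) : ℝ := (1 - ‖y‖ ^ 2) ^ α

/-- The perturbation `f(u) = |u|^p / (log (2 + u²))^a`. -/
def fpert (p a u : ℝ) : ℝ := |u| ^ p / (Real.log (2 + u ^ 2)) ^ a

/-- The antiderivative `F(u) = ∫₀ᵘ f(v) dv`. -/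
def Fpert (p a u : ℝ) : ℝ := ∫ v in (0:ℝ)..u, fpert p a v

/-- Divergence of a vector field on `ℝ^N`. -/
def vdiv {N : ℕ} (V : EuclideanSpace ℝ (Fin N) → EuclideanSpace ℝ (Fin N))
    (y : EuclideanSpace ℝ (Fin N)) : ℝ :=
  ∑ i, fderiv ℝ (fun x => ⟪V x, EuclideanSpace.single i 1⟫) y (EuclideanSpace.single i 1)

/-- The time derivative `∂ₛ w`. -/
def dw {N : ℕ} (w : ℝ → EuclideanSpace ℝ (Fin N) → ℝ) (s : ℝ)
    (y : EuclideanSpace ℝ (Fin N)) : ℝ :=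
  deriv (fun t => w t y) s

/-- `w` satisfies the similarity-variables equation at all times `s ∈ S`. -/
def SimEq (N : ℕ) (p a α : ℝ) (w : ℝ → EuclideanSpace ℝ (Fin N) → ℝ) (S : Set ℝ) : Prop :=
  ∀ s ∈ S, ∀ y ∈ UnitBall N,
    deriv (fun t => dw w t y) s =
      (1 / rho N α y) *
        vdiv (fun x => rho N α x • gradient (w s) x
            - (rho N α x * ⟪x, gradient (w s) x⟫) • x) y
      - (2 * (p + 1) / (p - 1) ^ 2) * w s y
      + |w s y| ^ (p - 1) * w s y
      - ((p + 3) / (p - 1)) * dw w s y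
      - 2 * ⟪y, gradient (dw w s) y⟫
      + Real.exp (-2 * p * s / (p - 1)) * fpert p a (Real.exp (2 * s / (p - 1)) * w s y)

/-- Membership in the weighted energy space `H`. -/
def MemH (N : ℕ) (α : ℝ) (w₁ w₂ : EuclideanSpace ℝ (Fin N) → ℝ) : Prop :=
  IntegrableOn
    (fun y => ((w₂ y) ^ 2 + ‖gradient w₁ y‖ ^ 2 * (1 - ‖y‖ ^ 2) + (w₁ y) ^ 2) * rho N α y)
    (UnitBall N)

/-- A solution of the similarity-variables equation on `B × [s₀, ∞)`,
with `(w, ∂ₛ w) ∈ C([s₀,∞), H)` and the integrability needed for the energy estimates. -/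
def SimSolution (N : ℕ) (p a α : ℝ) (w : ℝ → EuclideanSpace ℝ (Fin N) → ℝ) (s₀ : ℝ) : Prop :=
  SimEq N p a α w (Ici s₀) ∧
  ContDiffOn ℝ 2 (fun q : ℝ × EuclideanSpace ℝ (Fin N) => w q.1 q.2) (Ici s₀ ×ˢ UnitBall N) ∧
  (∀ s ∈ Ici s₀, MemH N α (w s) (dw w s)) ∧
  (∀ s ∈ Ici s₀, IntegrableOn (fun y => |w s y| ^ (p + 1) * rho N α y) (UnitBall N)) ∧
  (∀ s ∈ Ici s₀, IntegrableOn (fun y => (dw w s y) ^ 2 * rho N α y / (1 - ‖y‖ ^ 2)) (UnitBall N)) ∧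
  ContinuousOn (fun s => ∫ y in UnitBall N,
      ((dw w s y) ^ 2 + ‖gradient (w s) y‖ ^ 2 * (1 - ‖y‖ ^ 2) + (w s y) ^ 2) * rho N α y)
    (Ici s₀)

/-- The unperturbed energy `E₀`. -/
def Ezero (N : ℕ) (p α : ℝ) (w : ℝ → EuclideanSpace ℝ (Fin N) → ℝ) (s : ℝ) : ℝ :=
  ∫ y in UnitBall N,
    ((1 / 2) * (dw w s y) ^ 2 + (1 / 2) * ‖gradient (w s) y‖ ^ 2
      - (1 / 2) * ⟪y, gradient (w s) y⟫ ^ 2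
      + ((p + 1) / (p - 1) ^ 2) * (w s y) ^ 2
      - (1 / (p + 1)) * |w s y| ^ (p + 1)) * rho N α y

/-- The term `I(w(s), s)`. -/
def Ipart (N : ℕ) (p a α : ℝ) (w : ℝ → EuclideanSpace ℝ (Fin N) → ℝ) (s : ℝ) : ℝ :=
  - Real.exp (-2 * (p + 1) * s / (p - 1)) *
      ∫ y in UnitBall N, Fpert p a (Real.exp (2 * s / (p - 1)) * w s y) * rho N α y

/-- The term `J(w(s), s)`. -/
def Jpart (N : ℕ) (α b : ℝ) (w : ℝ → EuclideanSpace ℝ (Fin N) → ℝ) (s : ℝ) : ℝ :=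
  - (1 / s ^ b) * ∫ y in UnitBall N, w s y * dw w s y * rho N α y

/-- The modified energy `E(w(s), s) = E₀ + I + J`. -/
def Efun (N : ℕ) (p a α b : ℝ) (w : ℝ → EuclideanSpace ℝ (Fin N) → ℝ) (s : ℝ) : ℝ :=
  Ezero N p α w s + Ipart N p a α w s + Jpart N α b w s

/-- The Lyapunov functional `H(w(s), s)`. -/
def Hfun (N : ℕ) (p a α b θ : ℝ) (w : ℝ → EuclideanSpace ℝ (Fin N) → ℝ) (s : ℝ) : ℝ :=
  Real.exp ((p + 3) / ((a - 1) * s ^ (b - 1))) * Efun N p a α b w s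
    + θ * Real.exp (-(p + 1) * s / (p - 1))

/-- The dissipation term `∫_B (∂ₛ w)² ρ/(1-|y|²) dy`. -/
def Diss (N : ℕ) (α : ℝ) (w : ℝ → EuclideanSpace ℝ (Fin N) → ℝ) (s : ℝ) : ℝ :=
  ∫ y in UnitBall N, (dw w s y) ^ 2 * rho N α y / (1 - ‖y‖ ^ 2)

/-- The Laplacian on `ℝ^N`. -/
def lapl {N : ℕ} (u : EuclideanSpace ℝ (Fin N) → ℝ) (x : EuclideanSpace ℝ (Fin N)) : ℝ :=
  ∑ i, fderiv ℝ (fun x' => fderiv ℝ u x' (EuclideanSpace.single i 1)) x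
    (EuclideanSpace.single i 1)

/-- `u` is a solution of `∂ₜ²u = Δu + |u|^{p-1}u + f(u)` on its maximal influence domain
`D_u = {(x,t) : 0 ≤ t < T(x)}`, where the blow-up graph `T` is positive and 1-Lipschitz. -/
def WaveSolution (N : ℕ) (p a : ℝ) (u : EuclideanSpace ℝ (Fin N) → ℝ → ℝ)
    (T : EuclideanSpace ℝ (Fin N) → ℝ) : Prop :=
  LipschitzWith 1 T ∧ (∀ x, 0 < T x) ∧
  ∀ x t, 0 ≤ t → t < T x →
    deriv (fun τ => deriv (u x) τ) t =
      lapl (fun x' => u x' t) x + |u x t| ^ (p - 1) * u x t + fpert p a (u x t)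

/-- `x₀` is a non-characteristic point with cone slope `δ₀`: the cone
`C_{x₀,T(x₀),δ₀}` is contained in the domain of definition of `u`. -/
def NonChar (N : ℕ) (T : EuclideanSpace ℝ (Fin N) → ℝ)
    (x₀ : EuclideanSpace ℝ (Fin N)) (δ₀ : ℝ) : Prop :=
  0 < δ₀ ∧ δ₀ < 1 ∧
  ∀ ξ τ, (ξ, τ) ≠ (x₀, T x₀) → 0 ≤ τ → τ ≤ T x₀ - δ₀ * ‖ξ - x₀‖ → τ < T ξ

/-- The similarity-variables rescaling `w_{x₀,T₀}` of `u`. -/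
def simw (N : ℕ) (p : ℝ) (u : EuclideanSpace ℝ (Fin N) → ℝ → ℝ)
    (x₀ : EuclideanSpace ℝ (Fin N)) (T₀ : ℝ) (s : ℝ) (y : EuclideanSpace ℝ (Fin N)) : ℝ :=
  Real.exp (-2 * s / (p - 1)) * u (x₀ + Real.exp (-s) • y) (T₀ - Real.exp (-s))

/-! Split at `|w| = δ := e^{-s/(p-1)}`: where `|w| ≤ δ` the integrand is at most `δ^{p+1}/(log 2)^a`,
which integrates against `ρ` to `O(e^{-(p+1)s/(p-1)})`; where `|w| > δ` the logarithm is at least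
`log (e^{4s/(p-1)} δ²) = 2s/(p-1)`, which produces the factor `s^{-a}`. -/

lemma two_div_sub_pos {p n : ℝ} (hp : 1 < p) (hpn : p < 1 + 4 / n) : 0 < 2 / (p - 1) - n / 2 := by
  have hp1 : 0 < p - 1 := by linarith
  rw [sub_pos, div_lt_div_iff₀ two_pos hp1]
  rcases le_or_gt n 0 with hn | hn
  · nlinarith
  · nlinarith [(lt_div_iff₀' hn).mp (show p - 1 < 4 / n by linarith)]

lemma rho_nonneg {N : ℕ} (α : ℝ) {y : EuclideanSpace ℝ (Fin N)} (hy : y ∈ UnitBall N) :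
    0 ≤ rho N α y := by
  have : ‖y‖ < 1 := mem_ball_zero_iff.mp hy
  exact rpow_nonneg (by nlinarith [norm_nonneg y]) α

lemma rho_le_one {N : ℕ} {α : ℝ} (hα : 0 ≤ α) {y : EuclideanSpace ℝ (Fin N)}
    (hy : y ∈ UnitBall N) : rho N α y ≤ 1 := by
  have : ‖y‖ < 1 := mem_ball_zero_iff.mp hy
  exact rpow_le_one (by nlinarith [norm_nonneg y]) (by nlinarith [norm_nonneg y]) hα

lemma integrableOn_rho (N : ℕ) {α : ℝ} (hα : 0 ≤ α) : IntegrableOn (rho N α) (UnitBall N) := by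
  refine Measure.integrableOn_of_bounded (M := 1) measure_ball_lt_top.ne
    (by unfold rho; fun_prop) ?_
  filter_upwards [ae_restrict_mem measurableSet_ball] with y hy
  rw [norm_of_nonneg (rho_nonneg α hy)]
  exact rho_le_one hα hy

lemma abs_rpow_div_log_rpow_le {q a c δ : ℝ} (hq : 0 ≤ q) (ha : 0 ≤ a) (hc : 0 ≤ c) (hδ : 0 ≤ δ)
    (t : ℝ) :
    |t| ^ q / log (2 + c * t ^ 2) ^ a ≤ δ ^ q / log 2 ^ a + |t| ^ q / log (2 + c * δ ^ 2) ^ a := by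
  have hlog2 : 0 < log 2 := log_pos one_lt_two
  have log_mono : ∀ u : ℝ, log 2 ≤ log (2 + c * u ^ 2) := fun u =>
    log_le_log two_pos (by nlinarith [sq_nonneg u])
  have hsmall : 0 ≤ δ ^ q / log 2 ^ a := by positivity
  have hlarge : 0 ≤ |t| ^ q / log (2 + c * δ ^ 2) ^ a :=
    div_nonneg (by positivity) (rpow_nonneg (hlog2.le.trans (log_mono δ)) a)
  rcases le_or_gt |t| δ with ht | ht
  · refine le_add_of_le_of_nonneg ?_ hlarge
    exact div_le_div₀ (by positivity) (rpow_le_rpow (abs_nonneg t) ht hq) (by positivity)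
      (rpow_le_rpow hlog2.le (log_mono t) ha)
  · refine le_add_of_nonneg_of_le hsmall ?_
    have hδt : δ ^ 2 ≤ t ^ 2 := by nlinarith [sq_abs t, abs_nonneg t]
    refine div_le_div_of_nonneg_left (by positivity) (rpow_pos_of_pos
      (hlog2.trans_le (log_mono δ)) a) ?_
    exact rpow_le_rpow (hlog2.le.trans (log_mono δ))
      (log_le_log (by positivity) (by nlinarith)) ha

lemma integral_abs_rpow_div_log_rpow_le {X : Type*} [MeasurableSpace X] {μ : Measure X}
    {ρ w : X → ℝ} {q a c δ : ℝ} (hq : 0 ≤ q) (ha : 0 ≤ a) (hc : 0 ≤ c) (hδ : 0 ≤ δ)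
    (hρ : 0 ≤ᵐ[μ] ρ) (hρi : Integrable ρ μ) (hwi : Integrable (fun x => |w x| ^ q * ρ x) μ) :
    ∫ x, |w x| ^ q / log (2 + c * w x ^ 2) ^ a * ρ x ∂μ ≤
      δ ^ q / log 2 ^ a * ∫ x, ρ x ∂μ + (∫ x, |w x| ^ q * ρ x ∂μ) / log (2 + c * δ ^ 2) ^ a := by
  rw [← integral_const_mul, ← integral_div, ← integral_add (hρi.const_mul _) (hwi.div_const _)]
  refine integral_mono_of_nonneg ?_ ((hρi.const_mul _).add (hwi.div_const _)) ?_
  · filter_upwards [hρ] with x hx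
    have : 0 ≤ log (2 + c * w x ^ 2) := log_nonneg (by nlinarith [sq_nonneg (w x)])
    exact mul_nonneg (div_nonneg (by positivity) (rpow_nonneg this a)) hx
  · filter_upwards [hρ] with x hx
    calc |w x| ^ q / log (2 + c * w x ^ 2) ^ a * ρ x
        ≤ (δ ^ q / log 2 ^ a + |w x| ^ q / log (2 + c * δ ^ 2) ^ a) * ρ x :=
          mul_le_mul_of_nonneg_right (abs_rpow_div_log_rpow_le hq ha hc hδ (w x)) hx
      _ = δ ^ q / log 2 ^ a * ρ x + |w x| ^ q * ρ x / log (2 + c * δ ^ 2) ^ a := by ring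

lemma integral_abs_rpow_div_log_exp_le {X : Type*} [MeasurableSpace X] {μ : Measure X}
    {ρ w : X → ℝ} {p a s : ℝ} (hp : 1 < p) (ha : 0 ≤ a) (hs : 0 < s)
    (hρ : 0 ≤ᵐ[μ] ρ) (hρi : Integrable ρ μ) (hwi : Integrable (fun x => |w x| ^ (p + 1) * ρ x) μ) :
    ∫ x, |w x| ^ (p + 1) / log (2 + exp (4 * s / (p - 1)) * w x ^ 2) ^ a * ρ x ∂μ ≤
      exp (-(p + 1) * s / (p - 1)) / log 2 ^ a * ∫ x, ρ x ∂μ +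
        ((p - 1) / 2) ^ a / s ^ a * ∫ x, |w x| ^ (p + 1) * ρ x ∂μ := by
  have hp1 : 0 < p - 1 := by linarith
  set δ := exp (-(s / (p - 1)))
  have hδ : δ ^ (p + 1) = exp (-(p + 1) * s / (p - 1)) := by
    rw [← exp_mul]; congr 1; ring
  have hlog : s / ((p - 1) / 2) ≤ log (2 + exp (4 * s / (p - 1)) * δ ^ 2) := by
    have : exp (4 * s / (p - 1)) * δ ^ 2 = exp (s / ((p - 1) / 2)) := by
      rw [← exp_nat_mul, ← exp_add]; congr 1; field_simp; ring
    rw [this, le_log_iff_exp_le (by positivity)]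
    linarith
  have hI : 0 ≤ ∫ x, |w x| ^ (p + 1) * ρ x ∂μ :=
    integral_nonneg_of_ae (by filter_upwards [hρ] with x hx using mul_nonneg (by positivity) hx)
  calc _ ≤ δ ^ (p + 1) / log 2 ^ a * ∫ x, ρ x ∂μ +
        (∫ x, |w x| ^ (p + 1) * ρ x ∂μ) / log (2 + exp (4 * s / (p - 1)) * δ ^ 2) ^ a :=
        integral_abs_rpow_div_log_rpow_le (by linarith) ha (exp_pos _).le (exp_pos _).le hρ hρi hwi
    _ ≤ _ := by
      rw [hδ]
      refine add_le_add_right ?_ _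
      calc _ ≤ (∫ x, |w x| ^ (p + 1) * ρ x ∂μ) / (s / ((p - 1) / 2)) ^ a := by gcongr
        _ = _ := by rw [div_rpow hs.le (by positivity)]; field_simp

theorem log_integral_bound_general (N : ℕ) (p a α : ℝ) (hp : 1 < p)
    (hpc : p < 1 + 4 / ((N : ℝ) - 1)) (ha : 1 < a)
    (hα : α = 2 / (p - 1) - ((N : ℝ) - 1) / 2) :
    ∃ C > 0, ∀ s : ℝ, 1 ≤ s → ∀ w : EuclideanSpace ℝ (Fin N) → ℝ, Measurable w →
      IntegrableOn (fun y => |w y| ^ (p + 1) * rho N α y) (UnitBall N) →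
      (∫ y in UnitBall N,
          |w y| ^ (p + 1) / (Real.log (2 + Real.exp (4 * s / (p - 1)) * (w y) ^ 2)) ^ a
            * rho N α y) ≤
        C * Real.exp (-(p + 1) * s / (p - 1)) +
          (C / s ^ a) * ∫ y in UnitBall N, |w y| ^ (p + 1) * rho N α y := by
  have hα0 : 0 ≤ α := hα ▸ (two_div_sub_pos hp hpc).le
  set K := ∫ y in UnitBall N, rho N α y
  have hK : 0 ≤ K := setIntegral_nonneg measurableSet_ball fun y hy => rho_nonneg α hy
  refine ⟨K / log 2 ^ a + ((p - 1) / 2) ^ a, by positivity, fun s hs w _ hwi => ?_⟩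
  have hI : 0 ≤ ∫ y in UnitBall N, |w y| ^ (p + 1) * rho N α y :=
    setIntegral_nonneg measurableSet_ball fun y hy => mul_nonneg (by positivity) (rho_nonneg α hy)
  calc _ ≤ _ := integral_abs_rpow_div_log_exp_le hp (by linarith) (by linarith)
        (ae_restrict_of_forall_mem measurableSet_ball fun y hy => rho_nonneg α hy)
        (integrableOn_rho N hα0) hwi
    _ ≤ _ := by
      rw [div_mul_eq_mul_div, mul_comm, mul_div_right_comm]
      refine add_le_add ?_ (mul_le_mul_of_nonneg_right ?_ hI)
      · gcongr; exact le_add_of_nonneg_right (by positivity)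
      · gcongr; exact le_add_of_nonneg_left (by positivity)

/-- the logarithmic integral bound over the unit ball. -/
theorem log_integral_bound (N : ℕ) (hN : 2 ≤ N) (p a α : ℝ) (hp : 1 < p)
    (hpc : p < 1 + 4 / ((N : ℝ) - 1)) (ha : 1 < a)
    (hα : α = 2 / (p - 1) - ((N : ℝ) - 1) / 2) :
    ∃ C > 0, ∀ s : ℝ, 1 ≤ s → ∀ w : EuclideanSpace ℝ (Fin N) → ℝ, Measurable w →
      IntegrableOn (fun y => |w y| ^ (p + 1) * rho N α y) (UnitBall N) →
      (∫ y in UnitBall N,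
          |w y| ^ (p + 1) / (Real.log (2 + Real.exp (4 * s / (p - 1)) * (w y) ^ 2)) ^ a
            * rho N α y) ≤
        C * Real.exp (-(p + 1) * s / (p - 1)) +
          (C / s ^ a) * ∫ y in UnitBall N, |w y| ^ (p + 1) * rho N α y :=
  log_integral_bound_general N p a α hp hpc ha hα
end
end

section
/- Fix N ≥ 2 and 1 < p < 1 + 4/(N−1), and set α = 2/(p−1) − (N−1)/2 > 0 and ρ(y) = (1−|y|²)^α on the open unit ball B ⊂ ℝ^N. There exists a constant C = C(N,p) > 0 such that for every w ∈ H¹_{loc,u}(ℝ^N): ∫_B w²|y|² ρ/(1−|y|²) dy ≤ C ∫_B |∇w|² ρ (1−|y|²) dy + C ∫_B w² ρ dy. -/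
open MeasureTheory Real Filter Set
open scoped RealInnerProductSpace

noncomputable section

/-! Fix a unit vector `θ` and write `u(r) = w(rθ)`, `c = 1 - r²`. On `[0, b]`, `b < 1`, integrating
`(u² rᴺ c^α)' = 2 u u' rᴺ c^α + N u² rᴺ⁻¹ c^α - 2α u² rᴺ⁺¹ c^α / c` and dropping the nonnegative
boundary term gives `2α ∫ u² rᴺ⁺¹ c^α / c ≤ N ∫ u² rᴺ⁻¹ c^α + ∫ 2 |u u'| rᴺ c^α`. Young's inequality
bounds the last integrand by `α u² rᴺ⁺¹ c^α / c + α⁻¹ u'² rᴺ⁻¹ c^α c`, whose first part is absorbed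
on the left. Letting `b → 1` and integrating over `θ` in polar coordinates yields
`α ∫_B w² |y|² ρ / (1 - |y|²) ≤ N ∫_B w² ρ + α⁻¹ ∫_B |∇w|² ρ (1 - |y|²)`; the assumption on `p` is
exactly what makes `α` positive. -/

open Metric
open scoped ENNReal

section PolarCoordinates

variable {E : Type*} [NormedAddCommGroup E] [NormedSpace ℝ E] [FiniteDimensional ℝ E]
  [MeasurableSpace E] [BorelSpace E] [Nontrivial E] (μ : Measure E) [μ.IsAddHaarMeasure]

theorem lintegral_eq_lintegral_sphere_Ioi {f : E → ℝ≥0∞} (hf : Measurable f) :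
    ∫⁻ y, f y ∂μ = ∫⁻ θ : sphere (0 : E) 1, (∫⁻ r in Ioi (0 : ℝ),
      ENNReal.ofReal (r ^ (Module.finrank ℝ E - 1)) * f (r • (θ : E))) ∂μ.toSphere := by
  have hg : Measurable fun q : sphere (0 : E) 1 × Ioi (0 : ℝ) => f ((q.2 : ℝ) • (q.1 : E)) := by
    fun_prop
  calc ∫⁻ y, f y ∂μ = ∫⁻ x : ({0}ᶜ : Set E), f x ∂μ.comap (↑) := by
        rw [lintegral_subtype_comap (measurableSet_singleton _).compl, restrict_compl_singleton]
    _ = ∫⁻ x : ({0}ᶜ : Set E), f (((homeomorphUnitSphereProd E x).2 : ℝ) •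
          ((homeomorphUnitSphereProd E x).1 : E)) ∂μ.comap (↑) := by
        refine lintegral_congr fun x => ?_
        simp [smul_smul, mul_inv_cancel₀ (norm_ne_zero_iff.2 x.2)]
    _ = ∫⁻ q : sphere (0 : E) 1 × Ioi (0 : ℝ), f ((q.2 : ℝ) • (q.1 : E))
          ∂μ.toSphere.prod (.volumeIoiPow (Module.finrank ℝ E - 1)) :=
        (μ.measurePreserving_homeomorphUnitSphereProd).lintegral_comp hg
    _ = _ := by
        rw [lintegral_prod _ hg.aemeasurable]
        refine lintegral_congr fun θ => ?_
        rw [Measure.volumeIoiPow, lintegral_withDensity_eq_lintegral_mul _ (by fun_prop)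
          (by fun_prop), ← lintegral_subtype_comap measurableSet_Ioi]
        rfl

theorem setLIntegral_ball_eq_lintegral_sphere_Ioo {f : E → ℝ≥0∞} (hf : Measurable f) (R : ℝ) :
    ∫⁻ y in ball 0 R, f y ∂μ = ∫⁻ θ : sphere (0 : E) 1, (∫⁻ r in Ioo 0 R,
      ENNReal.ofReal (r ^ (Module.finrank ℝ E - 1)) * f (r • (θ : E))) ∂μ.toSphere := by
  rw [← lintegral_indicator measurableSet_ball,
    lintegral_eq_lintegral_sphere_Ioi μ (hf.indicator measurableSet_ball)]
  refine lintegral_congr fun θ => ?_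
  rw [← Ioi_inter_Iio, inter_comm, ← Measure.restrict_restrict measurableSet_Iio,
    ← lintegral_indicator measurableSet_Iio]
  refine setLIntegral_congr_fun measurableSet_Ioi fun r (hr : 0 < r) => ?_
  have hnorm : ‖r • (θ : E)‖ = r := by simp [norm_smul, abs_of_pos hr]
  by_cases hrR : r < R <;> simp [indicator, hnorm, hrR]

end PolarCoordinates

theorem setLIntegral_Ioo_le_of_forall_lt {F : ℝ → ℝ≥0∞} {a b : ℝ} {C : ℝ≥0∞}
    (h : ∀ c ∈ Ioo a b, ∫⁻ r in Ioo a c, F r ≤ C) : ∫⁻ r in Ioo a b, F r ≤ C := by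
  rcases le_or_gt b a with hba | hab
  · simp [Ioo_eq_empty_of_le hba]
  obtain ⟨c, hc_mono, hc_mem, hc_lim⟩ := exists_seq_strictMono_tendsto' hab
  have hU : ⋃ k, Ioo a (c k) = Ioo a b :=
    iUnion_Ioo_of_mono_of_isGLB_of_isLUB antitone_const hc_mono.monotone
      (by simp [isGLB_singleton]) (isLUB_of_tendsto_atTop hc_mono.monotone hc_lim)
  have hlim := tendsto_measure_iUnion_atTop (μ := volume.withDensity F)
    (s := fun k => Ioo a (c k)) (antitone_const.Ioo hc_mono.monotone)
  rw [hU, withDensity_apply _ measurableSet_Ioo] at hlim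
  refine le_of_tendsto' hlim fun k => ?_
  rw [Function.comp_apply, withDensity_apply _ measurableSet_Ioo]
  exact h _ (hc_mem k)

theorem abs_two_mul_le_mul_sq_add_inv_mul_sq {α : ℝ} (hα : 0 < α) (a b : ℝ) :
    |2 * a * b| ≤ α * a ^ 2 + α⁻¹ * b ^ 2 := by
  have key : α * |2 * a * b| ≤ α * (α * a ^ 2 + α⁻¹ * b ^ 2) := by
    rw [mul_add, mul_inv_cancel_left₀ hα.ne', abs_mul, abs_mul, abs_two, ← sq_abs a, ← sq_abs b]
    nlinarith [sq_nonneg (α * |a| - |b|)]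
  exact le_of_mul_le_mul_left key hα

section Ray

variable {n : ℕ} {α : ℝ}

theorem abs_two_mul_mul_pow_mul_rpow_le (hn : 1 ≤ n) (hα : 0 < α) {r : ℝ} (hr : 0 ≤ r)
    (hc : 0 < 1 - r ^ 2) (x y : ℝ) :
    |2 * x * y * (r ^ n * (1 - r ^ 2) ^ α)| ≤
      α * (r ^ (n - 1) * (x ^ 2 * r ^ 2 * (1 - r ^ 2) ^ α / (1 - r ^ 2))) +
        α⁻¹ * (r ^ (n - 1) * (y ^ 2 * (1 - r ^ 2) ^ α * (1 - r ^ 2))) := by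
  obtain ⟨m, rfl⟩ := Nat.exists_eq_add_of_le' hn
  set c := 1 - r ^ 2
  have hK : 0 ≤ r ^ m * c ^ α / c := by positivity
  have hfactor :
      2 * x * y * (r ^ (m + 1) * c ^ α) = r ^ m * c ^ α / c * (2 * (x * r) * (y * c)) := by
    field_simp
    ring
  calc |2 * x * y * (r ^ (m + 1) * c ^ α)|
      = r ^ m * c ^ α / c * |2 * (x * r) * (y * c)| := by
        rw [hfactor, abs_mul, abs_of_nonneg hK]
    _ ≤ r ^ m * c ^ α / c * (α * (x * r) ^ 2 + α⁻¹ * (y * c) ^ 2) :=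
        mul_le_mul_of_nonneg_left (abs_two_mul_le_mul_sq_add_inv_mul_sq hα _ _) hK
    _ = _ := by
        simp only [Nat.add_sub_cancel]
        field_simp

theorem hasDerivAt_pow_mul_one_sub_sq_rpow (hn : 1 ≤ n) (α : ℝ) {r : ℝ} (hc : 0 < 1 - r ^ 2) :
    HasDerivAt (fun t => t ^ n * (1 - t ^ 2) ^ α)
      (n * (r ^ (n - 1) * (1 - r ^ 2) ^ α) -
        2 * α * (r ^ (n - 1) * (r ^ 2 * (1 - r ^ 2) ^ α / (1 - r ^ 2)))) r := by
  have hc' : HasDerivAt (fun t => 1 - t ^ 2) (-(2 * r)) r := by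
    simpa using (hasDerivAt_pow 2 r).const_sub 1
  refine ((hasDerivAt_pow n r).mul (hc'.rpow_const (p := α) (Or.inl hc.ne'))).congr_deriv ?_
  obtain ⟨m, rfl⟩ := Nat.exists_eq_add_of_le' hn
  rw [Real.rpow_sub_one hc.ne']
  simp only [Nat.add_sub_cancel]
  field_simp
  ring

theorem integral_deriv_sq_mul_pow_mul_one_sub_sq_rpow_eq (hn : 1 ≤ n) {u : ℝ → ℝ} (hu : Differentiable ℝ u)
    {b : ℝ} (hb0 : 0 ≤ b) (hb1 : b < 1)
    (hP : IntervalIntegrable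
      (fun r => r ^ (n - 1) * (u r ^ 2 * r ^ 2 * (1 - r ^ 2) ^ α / (1 - r ^ 2))) volume 0 b)
    (hQ : IntervalIntegrable (fun r => r ^ (n - 1) * (u r ^ 2 * (1 - r ^ 2) ^ α)) volume 0 b)
    (hD : IntervalIntegrable
      (fun r => 2 * u r * deriv u r * (r ^ n * (1 - r ^ 2) ^ α)) volume 0 b) :
    (∫ r in 0..b, 2 * u r * deriv u r * (r ^ n * (1 - r ^ 2) ^ α)) +
        n * (∫ r in 0..b, r ^ (n - 1) * (u r ^ 2 * (1 - r ^ 2) ^ α)) -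
        2 * α * ∫ r in 0..b, r ^ (n - 1) * (u r ^ 2 * r ^ 2 * (1 - r ^ 2) ^ α / (1 - r ^ 2)) =
      u b ^ 2 * (b ^ n * (1 - b ^ 2) ^ α) := by
  have hderiv : ∀ r ∈ uIcc 0 b, HasDerivAt (fun t => u t ^ 2 * (t ^ n * (1 - t ^ 2) ^ α))
      (2 * u r * deriv u r * (r ^ n * (1 - r ^ 2) ^ α) +
        (n * (r ^ (n - 1) * (u r ^ 2 * (1 - r ^ 2) ^ α)) -
          2 * α * (r ^ (n - 1) * (u r ^ 2 * r ^ 2 * (1 - r ^ 2) ^ α / (1 - r ^ 2))))) r := by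
    intro r hr
    rw [uIcc_of_le hb0] at hr
    refine (((hu r).hasDerivAt.fun_pow 2).mul (hasDerivAt_pow_mul_one_sub_sq_rpow hn α
      (by nlinarith [hr.1, hr.2]))).congr_deriv ?_
    ring
  rw [← intervalIntegral.integral_const_mul, ← intervalIntegral.integral_const_mul, add_sub_assoc,
    ← intervalIntegral.integral_sub (hQ.const_mul _) (hP.const_mul _),
    ← intervalIntegral.integral_add hD ((hQ.const_mul _).sub (hP.const_mul _)),
    intervalIntegral.integral_eq_sub_of_hasDerivAt hderiv
      (hD.add ((hQ.const_mul _).sub (hP.const_mul _)))]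
  simp [Nat.one_le_iff_ne_zero.1 hn]

theorem hardy_interval (hn : 1 ≤ n) (hα : 0 < α) {u : ℝ → ℝ} (hu : Differentiable ℝ u)
    {b : ℝ} (hb0 : 0 ≤ b) (hb1 : b < 1)
    (hP : IntervalIntegrable
      (fun r => r ^ (n - 1) * (u r ^ 2 * r ^ 2 * (1 - r ^ 2) ^ α / (1 - r ^ 2))) volume 0 b)
    (hQ : IntervalIntegrable (fun r => r ^ (n - 1) * (u r ^ 2 * (1 - r ^ 2) ^ α)) volume 0 b)
    (hR : IntervalIntegrable
      (fun r => r ^ (n - 1) * (deriv u r ^ 2 * (1 - r ^ 2) ^ α * (1 - r ^ 2))) volume 0 b) :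
    α * ∫ r in 0..b, r ^ (n - 1) * (u r ^ 2 * r ^ 2 * (1 - r ^ 2) ^ α / (1 - r ^ 2)) ≤
      n * (∫ r in 0..b, r ^ (n - 1) * (u r ^ 2 * (1 - r ^ 2) ^ α)) +
        α⁻¹ * ∫ r in 0..b, r ^ (n - 1) * (deriv u r ^ 2 * (1 - r ^ 2) ^ α * (1 - r ^ 2)) := by
  have hmem : ∀ r ∈ uIcc 0 b, 0 ≤ r ∧ 0 < 1 - r ^ 2 := by
    intro r hr
    rw [uIcc_of_le hb0] at hr
    exact ⟨hr.1, by nlinarith [hr.1, hr.2]⟩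
  have hD_le : ∀ r ∈ uIcc 0 b, |2 * u r * deriv u r * (r ^ n * (1 - r ^ 2) ^ α)| ≤
      α * (r ^ (n - 1) * (u r ^ 2 * r ^ 2 * (1 - r ^ 2) ^ α / (1 - r ^ 2))) +
        α⁻¹ * (r ^ (n - 1) * (deriv u r ^ 2 * (1 - r ^ 2) ^ α * (1 - r ^ 2))) := fun r hr =>
    abs_two_mul_mul_pow_mul_rpow_le hn hα (hmem r hr).1 (hmem r hr).2 _ _
  have hPR := (hP.const_mul α).add (hR.const_mul α⁻¹)
  have := hu.continuous
  have hD := hPR.mono_fun' (f := fun r => 2 * u r * deriv u r * (r ^ n * (1 - r ^ 2) ^ α))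
    (by fun_prop) <|
    ae_restrict_of_forall_mem measurableSet_uIoc fun r hr => hD_le r (uIoc_subset_uIcc hr)
  have hD_int := intervalIntegral.integral_mono_on hb0 hD hPR fun r hr =>
    (le_abs_self _).trans (hD_le r (by rwa [uIcc_of_le hb0]))
  rw [intervalIntegral.integral_add (hP.const_mul α) (hR.const_mul α⁻¹),
    intervalIntegral.integral_const_mul, intervalIntegral.integral_const_mul] at hD_int
  have hψb : 0 ≤ u b ^ 2 * (b ^ n * (1 - b ^ 2) ^ α) := by
    have := (hmem b right_mem_uIcc).2
    positivity
  have := integral_deriv_sq_mul_pow_mul_one_sub_sq_rpow_eq hn hu hb0 hb1 hP hQ hD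
  linarith

theorem lintegral_hardy_Ioo (hn : 1 ≤ n) (hα : 0 < α) {u : ℝ → ℝ} (hu : Differentiable ℝ u)
    {b : ℝ} (hb0 : 0 ≤ b) (hb1 : b < 1)
    (hR : IntegrableOn
      (fun r => r ^ (n - 1) * (deriv u r ^ 2 * (1 - r ^ 2) ^ α * (1 - r ^ 2))) (Ioo 0 b)) :
    ENNReal.ofReal α * ∫⁻ r in Ioo 0 b,
        ENNReal.ofReal (r ^ (n - 1) * (u r ^ 2 * r ^ 2 * (1 - r ^ 2) ^ α / (1 - r ^ 2))) ≤
      ENNReal.ofReal n *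
          (∫⁻ r in Ioo 0 b, ENNReal.ofReal (r ^ (n - 1) * (u r ^ 2 * (1 - r ^ 2) ^ α))) +
        ENNReal.ofReal α⁻¹ * ∫⁻ r in Ioo 0 b,
          ENNReal.ofReal (r ^ (n - 1) * (deriv u r ^ 2 * (1 - r ^ 2) ^ α * (1 - r ^ 2))) := by
  have hmem : ∀ r ∈ Icc 0 b, 0 ≤ r ∧ 0 < 1 - r ^ 2 := fun r hr =>
    ⟨hr.1, by nlinarith [hr.1, hr.2]⟩
  have := hu.continuous
  have hint : ∀ f : ℝ → ℝ, (∀ r ∈ Icc 0 b, ContinuousAt f r) → IntegrableOn f (Ioo 0 b) :=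
    fun f hf => (continuousOn_of_forall_continuousAt hf).integrableOn_Icc.mono_set
      Ioo_subset_Icc_self
  have hP := hint (fun r => r ^ (n - 1) * (u r ^ 2 * r ^ 2 * (1 - r ^ 2) ^ α / (1 - r ^ 2)))
    fun r hr => by have := (hmem r hr).2; fun_prop (disch := positivity)
  have hQ := hint (fun r => r ^ (n - 1) * (u r ^ 2 * (1 - r ^ 2) ^ α))
    fun r hr => by have := (hmem r hr).2; fun_prop (disch := positivity)
  have hofReal : ∀ {f : ℝ → ℝ}, IntegrableOn f (Ioo 0 b) → (∀ r ∈ Icc 0 b, 0 ≤ f r) →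
      ENNReal.ofReal (∫ r in Ioo 0 b, f r) = ∫⁻ r in Ioo 0 b, ENNReal.ofReal (f r) :=
    fun hf h0 => ofReal_integral_eq_lintegral_ofReal hf <|
      ae_restrict_of_forall_mem measurableSet_Ioo fun r hr => h0 r (Ioo_subset_Icc_self hr)
  have hii : ∀ {f : ℝ → ℝ}, IntegrableOn f (Ioo 0 b) → IntervalIntegrable f volume 0 b :=
    fun hf => (intervalIntegrable_iff_integrableOn_Ioo_of_le hb0).2 hf
  have key := hardy_interval hn hα hu hb0 hb1 (hii hP) (hii hQ) (hii hR)
  simp only [intervalIntegral.integral_of_le hb0, integral_Ioc_eq_integral_Ioo] at key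
  rw [← hofReal hP fun r hr => by obtain ⟨h0, h1⟩ := hmem r hr; positivity,
    ← hofReal hQ fun r hr => by obtain ⟨h0, h1⟩ := hmem r hr; positivity,
    ← hofReal hR fun r hr => by obtain ⟨h0, h1⟩ := hmem r hr; positivity,
    ← ENNReal.ofReal_mul hα.le, ← ENNReal.ofReal_mul (Nat.cast_nonneg n),
    ← ENNReal.ofReal_mul (inv_nonneg.2 hα.le)]
  exact (ENNReal.ofReal_le_ofReal key).trans ENNReal.ofReal_add_le

theorem lintegral_hardy_ray (hn : 1 ≤ n) (hα : 0 < α) {u : ℝ → ℝ} (hu : Differentiable ℝ u) :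
    ENNReal.ofReal α * ∫⁻ r in Ioo 0 1,
        ENNReal.ofReal (r ^ (n - 1) * (u r ^ 2 * r ^ 2 * (1 - r ^ 2) ^ α / (1 - r ^ 2))) ≤
      ENNReal.ofReal n *
          (∫⁻ r in Ioo 0 1, ENNReal.ofReal (r ^ (n - 1) * (u r ^ 2 * (1 - r ^ 2) ^ α))) +
        ENNReal.ofReal α⁻¹ * ∫⁻ r in Ioo 0 1,
          ENNReal.ofReal (r ^ (n - 1) * (deriv u r ^ 2 * (1 - r ^ 2) ^ α * (1 - r ^ 2))) := by
  set R := fun r : ℝ => r ^ (n - 1) * (deriv u r ^ 2 * (1 - r ^ 2) ^ α * (1 - r ^ 2))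
  rcases eq_top_or_lt_top (∫⁻ r in Ioo 0 1, ENNReal.ofReal (R r)) with hR_top | hR_fin
  · rw [hR_top, ENNReal.mul_top (ENNReal.ofReal_pos.2 (inv_pos.2 hα)).ne']
    exact le_top.trans_eq (add_top _).symm
  have hR_nonneg : ∀ r ∈ Ioo (0 : ℝ) 1, 0 ≤ R r := fun r hr => by
    have : 0 < 1 - r ^ 2 := by nlinarith [hr.1, hr.2]
    have := hr.1
    positivity
  have hR : IntegrableOn R (Ioo 0 1) :=
    ⟨(by fun_prop : Measurable R).aestronglyMeasurable, (hasFiniteIntegral_iff_ofReal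
      (ae_restrict_of_forall_mem measurableSet_Ioo hR_nonneg)).2 hR_fin⟩
  rw [← lintegral_const_mul' _ _ ENNReal.ofReal_ne_top]
  refine setLIntegral_Ioo_le_of_forall_lt fun b hb => ?_
  have hsub : Ioo 0 b ⊆ Ioo (0 : ℝ) 1 := Ioo_subset_Ioo_right hb.2.le
  rw [lintegral_const_mul' _ _ ENNReal.ofReal_ne_top]
  refine (lintegral_hardy_Ioo hn hα hu hb.1.le hb.2 (hR.mono_set hsub)).trans ?_
  gcongr

end Ray

theorem one_sub_norm_sq_pos {E : Type*} [SeminormedAddCommGroup E] {y : E}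
    (hy : y ∈ ball (0 : E) 1) : 0 < 1 - ‖y‖ ^ 2 := by
  rw [mem_ball_zero_iff] at hy
  nlinarith [norm_nonneg y]

section Ball

variable {E : Type*} [NormedAddCommGroup E] [InnerProductSpace ℝ E] [FiniteDimensional ℝ E]
  {α : ℝ}

theorem measurable_gradient [MeasurableSpace E] [BorelSpace E] (w : E → ℝ) :
    Measurable (gradient w) :=
  (InnerProductSpace.toDual ℝ E).symm.continuous.measurable.comp (measurable_fderiv ℝ w)

theorem abs_deriv_comp_smul_le {w : E → ℝ} (hw : Differentiable ℝ w) {θ : E} (hθ : ‖θ‖ = 1)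
    (r : ℝ) : |deriv (fun t : ℝ => w (t • θ)) r| ≤ ‖gradient w (r • θ)‖ := by
  have hd : HasDerivAt (fun t : ℝ => w (t • θ)) (fderiv ℝ w (r • θ) θ) r := by
    refine (hw (r • θ)).hasFDerivAt.comp_hasDerivAt (f := fun t : ℝ => t • θ) r ?_
    simpa using (hasDerivAt_id r).smul_const θ
  rw [hd.deriv, ← InnerProductSpace.toDual_symm_apply]
  simpa [hθ] using abs_real_inner_le_norm (gradient w (r • θ)) θ

theorem lintegral_hardy_ray_smul {n : ℕ} (hn : 1 ≤ n) (hα : 0 < α) {w : E → ℝ}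
    (hw : Differentiable ℝ w) {θ : E} (hθ : ‖θ‖ = 1) :
    ∫⁻ r in Ioo 0 1, ENNReal.ofReal (r ^ (n - 1)) * (ENNReal.ofReal α * ENNReal.ofReal
        (w (r • θ) ^ 2 * ‖r • θ‖ ^ 2 * (1 - ‖r • θ‖ ^ 2) ^ α / (1 - ‖r • θ‖ ^ 2))) ≤
      ∫⁻ r in Ioo 0 1, ENNReal.ofReal (r ^ (n - 1)) *
        (ENNReal.ofReal n * ENNReal.ofReal (w (r • θ) ^ 2 * (1 - ‖r • θ‖ ^ 2) ^ α) +
          ENNReal.ofReal α⁻¹ * ENNReal.ofReal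
            (‖gradient w (r • θ)‖ ^ 2 * (1 - ‖r • θ‖ ^ 2) ^ α * (1 - ‖r • θ‖ ^ 2))) := by
  have hnorm : ∀ r ∈ Ioo (0 : ℝ) 1, ‖r • θ‖ = r := fun r hr => by
    simp [norm_smul, hθ, abs_of_pos hr.1]
  have hweight : ∀ r ∈ Ioo (0 : ℝ) 1, 0 ≤ r ^ (n - 1) := fun r hr => pow_nonneg hr.1.le _
  set u := fun t : ℝ => w (t • θ)
  have hu : Differentiable ℝ u := hw.comp (differentiable_id.smul_const _)
  calc ∫⁻ r in Ioo 0 1, ENNReal.ofReal (r ^ (n - 1)) * (ENNReal.ofReal α * ENNReal.ofReal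
          (u r ^ 2 * ‖r • θ‖ ^ 2 * (1 - ‖r • θ‖ ^ 2) ^ α / (1 - ‖r • θ‖ ^ 2)))
      = ENNReal.ofReal α * ∫⁻ r in Ioo 0 1,
          ENNReal.ofReal (r ^ (n - 1) * (u r ^ 2 * r ^ 2 * (1 - r ^ 2) ^ α / (1 - r ^ 2))) := by
        rw [← lintegral_const_mul' _ _ ENNReal.ofReal_ne_top]
        refine setLIntegral_congr_fun measurableSet_Ioo fun r hr => ?_
        rw [hnorm r hr, ENNReal.ofReal_mul (hweight r hr), mul_left_comm]
    _ ≤ _ := lintegral_hardy_ray hn hα hu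
    _ ≤ ENNReal.ofReal n * (∫⁻ r in Ioo 0 1,
            ENNReal.ofReal (r ^ (n - 1) * (u r ^ 2 * (1 - r ^ 2) ^ α))) +
          ENNReal.ofReal α⁻¹ * ∫⁻ r in Ioo 0 1, ENNReal.ofReal
            (r ^ (n - 1) * (‖gradient w (r • θ)‖ ^ 2 * (1 - r ^ 2) ^ α * (1 - r ^ 2))) := by
        refine add_le_add le_rfl (mul_le_mul_right ?_ _)
        refine setLIntegral_mono' measurableSet_Ioo fun r hr => ENNReal.ofReal_le_ofReal ?_
        have : 0 < 1 - r ^ 2 := by nlinarith [hr.1, hr.2]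
        have := hweight r hr
        gcongr r ^ (n - 1) * (?_ * _ * _)
        exact sq_le_sq.2 ((abs_deriv_comp_smul_le hw hθ r).trans_eq (abs_norm _).symm)
    _ = _ := by
        have := hu.continuous
        rw [← lintegral_const_mul' _ _ ENNReal.ofReal_ne_top,
          ← lintegral_const_mul' _ _ ENNReal.ofReal_ne_top, ← lintegral_add_left (by fun_prop)]
        refine setLIntegral_congr_fun measurableSet_Ioo fun r hr => ?_
        simp only [u, hnorm r hr, ENNReal.ofReal_mul (hweight r hr), mul_add, mul_left_comm]

variable [MeasurableSpace E] [BorelSpace E] [Nontrivial E] (μ : Measure E) [μ.IsAddHaarMeasure]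

theorem lintegral_hardy_unitBall (hα : 0 < α) {w : E → ℝ} (hw : Differentiable ℝ w) :
    ENNReal.ofReal α * ∫⁻ y in ball 0 1,
        ENNReal.ofReal (w y ^ 2 * ‖y‖ ^ 2 * (1 - ‖y‖ ^ 2) ^ α / (1 - ‖y‖ ^ 2)) ∂μ ≤
      ENNReal.ofReal (Module.finrank ℝ E) *
          (∫⁻ y in ball 0 1, ENNReal.ofReal (w y ^ 2 * (1 - ‖y‖ ^ 2) ^ α) ∂μ) +
        ENNReal.ofReal α⁻¹ * ∫⁻ y in ball 0 1,
          ENNReal.ofReal (‖gradient w y‖ ^ 2 * (1 - ‖y‖ ^ 2) ^ α * (1 - ‖y‖ ^ 2)) ∂μ := by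
  have := measurable_gradient w
  have := hw.continuous
  rw [← lintegral_const_mul' _ _ ENNReal.ofReal_ne_top,
    ← lintegral_const_mul' _ _ ENNReal.ofReal_ne_top,
    ← lintegral_const_mul' _ _ ENNReal.ofReal_ne_top, ← lintegral_add_left (by fun_prop),
    setLIntegral_ball_eq_lintegral_sphere_Ioo μ (by fun_prop),
    setLIntegral_ball_eq_lintegral_sphere_Ioo μ (by fun_prop)]
  exact lintegral_mono fun θ => lintegral_hardy_ray_smul Module.finrank_pos hα hw (by simp)

theorem hardy_unitBall (hα : 0 < α) {w : E → ℝ} (hw : Differentiable ℝ w)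
    (hw_int : IntegrableOn (fun y => w y ^ 2) (ball 0 1) μ)
    (hgrad_int : IntegrableOn (fun y => ‖gradient w y‖ ^ 2) (ball 0 1) μ) :
    α * ∫ y in ball 0 1, w y ^ 2 * ‖y‖ ^ 2 * (1 - ‖y‖ ^ 2) ^ α / (1 - ‖y‖ ^ 2) ∂μ ≤
      Module.finrank ℝ E * (∫ y in ball 0 1, w y ^ 2 * (1 - ‖y‖ ^ 2) ^ α ∂μ) +
        α⁻¹ * ∫ y in ball 0 1, ‖gradient w y‖ ^ 2 * (1 - ‖y‖ ^ 2) ^ α * (1 - ‖y‖ ^ 2) ∂μ := by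
  have hc : ∀ y ∈ ball (0 : E) 1, 0 < 1 - ‖y‖ ^ 2 ∧ 1 - ‖y‖ ^ 2 ≤ 1 := fun y hy =>
    ⟨one_sub_norm_sq_pos hy, sub_le_self _ (sq_nonneg _)⟩
  have hρ : ∀ y ∈ ball (0 : E) 1, 0 ≤ (1 - ‖y‖ ^ 2) ^ α ∧ (1 - ‖y‖ ^ 2) ^ α ≤ 1 := fun y hy =>
    ⟨rpow_nonneg (hc y hy).1.le _, rpow_le_one (hc y hy).1.le (hc y hy).2 hα.le⟩
  have := measurable_gradient w
  have := hw.continuous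
  have := Real.continuous_rpow_const hα.le
  have hQ : IntegrableOn (fun y => w y ^ 2 * (1 - ‖y‖ ^ 2) ^ α) (ball 0 1) μ :=
    hw_int.mul_bdd (c := 1) (by fun_prop) <| ae_restrict_of_forall_mem measurableSet_ball
      fun y hy => by rw [norm_of_nonneg (hρ y hy).1]; exact (hρ y hy).2
  have hR : IntegrableOn (fun y => ‖gradient w y‖ ^ 2 * (1 - ‖y‖ ^ 2) ^ α * (1 - ‖y‖ ^ 2))
      (ball 0 1) μ := by
    simp only [mul_assoc]
    refine hgrad_int.mul_bdd (c := 1) (by fun_prop) <|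
      ae_restrict_of_forall_mem measurableSet_ball fun y hy => ?_
    rw [norm_of_nonneg (mul_nonneg (hρ y hy).1 (hc y hy).1.le)]
    exact mul_le_one₀ (hρ y hy).2 (hc y hy).1.le (hc y hy).2
  have hnonneg : ∀ f : E → ℝ, (∀ y ∈ ball (0 : E) 1, 0 ≤ f y) → 0 ≤ᵐ[μ.restrict (ball 0 1)] f :=
    fun f hf => ae_restrict_of_forall_mem measurableSet_ball hf
  have hQ_nonneg := hnonneg _ fun y hy => mul_nonneg (sq_nonneg (w y)) (hρ y hy).1
  have hR_nonneg := hnonneg _ fun y hy =>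
    mul_nonneg (mul_nonneg (sq_nonneg ‖gradient w y‖) (hρ y hy).1) (hc y hy).1.le
  have hP_nonneg := hnonneg (fun y => w y ^ 2 * ‖y‖ ^ 2 * (1 - ‖y‖ ^ 2) ^ α / (1 - ‖y‖ ^ 2))
    fun y hy => by have := (hc y hy).1; have := (hρ y hy).1; positivity
  have hQ0 := integral_nonneg_of_ae hQ_nonneg
  have hR0 := integral_nonneg_of_ae hR_nonneg
  rw [← ENNReal.ofReal_le_ofReal_iff
      (add_nonneg (mul_nonneg (Nat.cast_nonneg _) hQ0) (mul_nonneg (inv_nonneg.2 hα.le) hR0)),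
    ENNReal.ofReal_add (by positivity) (by positivity),
    ENNReal.ofReal_mul (Nat.cast_nonneg _), ENNReal.ofReal_mul (inv_nonneg.2 hα.le),
    ofReal_integral_eq_lintegral_ofReal hQ hQ_nonneg,
    ofReal_integral_eq_lintegral_ofReal hR hR_nonneg,
    ENNReal.ofReal_mul hα.le, integral_eq_lintegral_of_nonneg_ae hP_nonneg
      (Measurable.aestronglyMeasurable (by fun_prop))]
  exact (mul_le_mul_right ENNReal.ofReal_toReal_le _).trans (lintegral_hardy_unitBall μ hα hw)

end Ball

theorem sub_pos_of_lt_one_add_four_div {N p : ℝ} (hN : 1 < N) (hp : 1 < p)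
    (hpc : p < 1 + 4 / (N - 1)) : 0 < 2 / (p - 1) - (N - 1) / 2 := by
  have h : (p - 1) * (N - 1) < 4 := by
    rw [← lt_div_iff₀ (by linarith)]
    linarith
  rw [sub_pos, div_lt_div_iff₀ two_pos (by linarith)]
  linarith

/-- Hardy-type inequality on the unit ball for `w ∈ H¹_{loc,u}(ℝ^N)`. -/
theorem hardy_inequality (N : ℕ) (hN : 2 ≤ N) (p α : ℝ) (hp : 1 < p)
    (hpc : p < 1 + 4 / ((N : ℝ) - 1)) (hα : α = 2 / (p - 1) - ((N : ℝ) - 1) / 2) :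
    ∃ C > 0, ∀ w : EuclideanSpace ℝ (Fin N) → ℝ, Differentiable ℝ w →
      (∃ M : ℝ, ∀ d : EuclideanSpace ℝ (Fin N),
        IntegrableOn (fun y => (w y) ^ 2) (Metric.ball d 1) ∧
        IntegrableOn (fun y => ‖gradient w y‖ ^ 2) (Metric.ball d 1) ∧
        (∫ y in Metric.ball d 1, (w y) ^ 2) ≤ M ∧
        (∫ y in Metric.ball d 1, ‖gradient w y‖ ^ 2) ≤ M) →
      (∫ y in UnitBall N, (w y) ^ 2 * ‖y‖ ^ 2 * rho N α y / (1 - ‖y‖ ^ 2)) ≤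
        C * (∫ y in UnitBall N, ‖gradient w y‖ ^ 2 * rho N α y * (1 - ‖y‖ ^ 2)) +
          C * ∫ y in UnitBall N, (w y) ^ 2 * rho N α y := by
  have hα0 : 0 < α := hα ▸ sub_pos_of_lt_one_add_four_div (by exact_mod_cast hN) hp hpc
  have : NeZero N := ⟨by omega⟩
  refine ⟨(N + α⁻¹) / α, by positivity, fun w hw ⟨_, hM⟩ => ?_⟩
  obtain ⟨hw_int, hgrad_int, -⟩ := hM 0
  have key := hardy_unitBall volume hα0 hw hw_int hgrad_int
  rw [finrank_euclideanSpace_fin] at key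
  unfold UnitBall rho
  set Y := ∫ y in ball (0 : EuclideanSpace ℝ (Fin N)) 1, w y ^ 2 * (1 - ‖y‖ ^ 2) ^ α
  set Z := ∫ y in ball (0 : EuclideanSpace ℝ (Fin N)) 1,
    ‖gradient w y‖ ^ 2 * (1 - ‖y‖ ^ 2) ^ α * (1 - ‖y‖ ^ 2)
  have hY : 0 ≤ Y := setIntegral_nonneg measurableSet_ball fun y hy => by
    have := one_sub_norm_sq_pos hy; positivity
  have hZ : 0 ≤ Z := setIntegral_nonneg measurableSet_ball fun y hy => by
    have := one_sub_norm_sq_pos hy; positivity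
  calc _ ≤ (N * Y + α⁻¹ * Z) / α := by rw [le_div_iff₀ hα0]; linarith
    _ ≤ (N + α⁻¹) / α * Z + (N + α⁻¹) / α * Y := by
      rw [← mul_add, div_mul_eq_mul_div]
      gcongr
      nlinarith [mul_nonneg (Nat.cast_nonneg N) hZ, mul_nonneg (inv_nonneg.2 hα0.le) hY]
end
end
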